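/- For all reals c and all Δ > 0, lim_{k→∞} Σ_{i=1}^{k} ( φ(c + (2i+1)Δ/(2k)) − φ(c + (2i−1)Δ/(2k)) )² / ( Φ(c + (2i+1)Δ/(2k)) − Φ(c + (2i−1)Δ/(2k)) ) = c·φ(c) − (c+Δ)·φ(c+Δ) + Φ(c+Δ) − Φ(c). -/

import Mathlib

/-!
On a cell `[a, b]` put `P = Φ b - Φ a`, `M = ∫ t φ = φ a - φ b` and `Q = ∫ t² φ = G b - G a`
with `G x = Φ x - x φ x` (since `(-x φ x)' = x² φ x - φ x`). The summand is `M² / P`, and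
`Q - M² / P` is `P` times the variance of `φ` restricted to the cell, which lies between `0`
(Cauchy–Schwarz) and `((b - a) / 2)²` (Popoviciu). Summed over the cells, `Q` telescopes to an
increment of `G` tending to `G (c + Δ) - G c`, while the error is `O(1 / k²)`.
-/

open MeasureTheory Real Filter

/-- Standard Gaussian density. -/
noncomputable def phi (x : ℝ) : ℝ := (Real.sqrt (2 * Real.pi))⁻¹ * Real.exp (-(x ^ 2) / 2)

/-- Standard Gaussian cumulative distribution function. -/
noncomputable def Phi (x : ℝ) : ℝ := ∫ t in Set.Iic x, phi t

open Topology

section WeightedMoments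

variable {w : ℝ → ℝ} {a b : ℝ}

lemma integral_sub_sq_mul (hw : IntervalIntegrable w volume a b) (m : ℝ) :
    ∫ t in a..b, (t - m) ^ 2 * w t =
      (∫ t in a..b, t ^ 2 * w t) - 2 * m * (∫ t in a..b, t * w t) + m ^ 2 * ∫ t in a..b, w t := by
  have h1 : IntervalIntegrable (fun t => t * w t) volume a b :=
    hw.continuousOn_mul continuousOn_id
  have h2 : IntervalIntegrable (fun t => t ^ 2 * w t) volume a b :=
    hw.continuousOn_mul (continuousOn_pow 2)
  have hexpand : ∀ t, (t - m) ^ 2 * w t = t ^ 2 * w t - 2 * m * (t * w t) + m ^ 2 * w t :=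
    fun t => by ring
  simp_rw [hexpand]
  rw [intervalIntegral.integral_add (h2.sub (h1.const_mul _)) (hw.const_mul _),
    intervalIntegral.integral_sub h2 (h1.const_mul _), intervalIntegral.integral_const_mul,
    intervalIntegral.integral_const_mul]

lemma sq_integral_mul_le_integral_mul_integral (hab : a ≤ b)
    (hw : IntervalIntegrable w volume a b) (hw0 : ∀ t ∈ Set.Icc a b, 0 ≤ w t) :
    (∫ t in a..b, t * w t) ^ 2 ≤ (∫ t in a..b, w t) * ∫ t in a..b, t ^ 2 * w t := by
  have hquad : ∀ m : ℝ, 0 ≤ (∫ t in a..b, w t) * (m * m) + (-2 * ∫ t in a..b, t * w t) * m +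
      ∫ t in a..b, t ^ 2 * w t := fun m => by
    have := intervalIntegral.integral_nonneg (μ := volume) hab
      fun t ht => mul_nonneg (sq_nonneg (t - m)) (hw0 t ht)
    rw [integral_sub_sq_mul hw] at this
    linear_combination this
  have := discrim_le_zero hquad
  rw [discrim] at this
  linarith

lemma integral_mul_integral_sub_sq_le (hab : a ≤ b)
    (hw : IntervalIntegrable w volume a b) (hw0 : ∀ t ∈ Set.Icc a b, 0 ≤ w t) :
    (∫ t in a..b, w t) * (∫ t in a..b, t ^ 2 * w t) - (∫ t in a..b, t * w t) ^ 2 ≤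
      ((b - a) / 2) ^ 2 * (∫ t in a..b, w t) ^ 2 := by
  have hspread : ∫ t in a..b, (t - (a + b) / 2) ^ 2 * w t ≤
      ((b - a) / 2) ^ 2 * ∫ t in a..b, w t := by
    rw [← intervalIntegral.integral_const_mul]
    refine intervalIntegral.integral_mono_on hab (hw.continuousOn_mul (by fun_prop))
      (hw.const_mul _) fun t ht => mul_le_mul_of_nonneg_right ?_ (hw0 t ht)
    exact sq_le_sq' (by linarith [ht.1, ht.2]) (by linarith [ht.1, ht.2])
  rw [integral_sub_sq_mul hw] at hspread
  have hP : 0 ≤ ∫ t in a..b, w t := intervalIntegral.integral_nonneg hab hw0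
  -- `P Q - M² = P ∫ (t - m)² w - (m P - M)²` for the midpoint `m`
  nlinarith [mul_le_mul_of_nonneg_left hspread hP,
    sq_nonneg ((a + b) / 2 * (∫ t in a..b, w t) - ∫ t in a..b, t * w t)]

end WeightedMoments

@[fun_prop]
lemma continuous_phi : Continuous phi := by
  unfold phi; fun_prop

lemma phi_pos (x : ℝ) : 0 < phi x := by
  unfold phi; positivity

lemma hasDerivAt_phi (x : ℝ) : HasDerivAt phi (-x * phi x) x := by
  have h := (((hasDerivAt_pow 2 x).fun_neg.div_const 2).exp).const_mul (√(2 * π))⁻¹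
  exact h.congr_deriv (by simp only [phi]; push_cast; ring)

lemma integrable_phi : Integrable phi := by
  convert (integrable_exp_neg_mul_sq (by norm_num : (0 : ℝ) < 1 / 2)).const_mul (√(2 * π))⁻¹
    using 2 with x
  simp only [phi]; ring_nf

lemma Phi_sub_Phi (a b : ℝ) : Phi b - Phi a = ∫ t in a..b, phi t :=
  intervalIntegral.integral_Iic_sub_Iic integrable_phi.integrableOn integrable_phi.integrableOn

lemma strictMono_Phi : StrictMono Phi := fun a b hab => by
  rw [← sub_pos, Phi_sub_Phi]
  exact intervalIntegral.intervalIntegral_pos_of_pos (continuous_phi.intervalIntegrable a b)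
    phi_pos hab

lemma continuous_Phi : Continuous Phi := by
  have h : Phi = fun x => Phi 0 + ∫ t in (0 : ℝ)..x, phi t := by
    ext x; rw [← Phi_sub_Phi]; ring
  rw [h]
  exact continuous_const.add (intervalIntegral.continuous_primitive
    (fun a b => continuous_phi.intervalIntegrable a b) 0)

lemma integral_mul_phi (a b : ℝ) : ∫ t in a..b, t * phi t = phi a - phi b := by
  rw [intervalIntegral.integral_eq_sub_of_hasDerivAt (f := fun x => -phi x)
    (fun x _ => by simpa using (hasDerivAt_phi x).fun_neg)
    ((by fun_prop : Continuous fun t => t * phi t).intervalIntegrable _ _)]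
  ring

lemma integral_sq_mul_phi (a b : ℝ) :
    ∫ t in a..b, t ^ 2 * phi t = (Phi b - b * phi b) - (Phi a - a * phi a) := by
  have hderiv : ∀ x ∈ Set.uIcc a b,
      HasDerivAt (fun y => -(y * phi y)) (x ^ 2 * phi x - phi x) x := fun x _ => by
    refine ((hasDerivAt_id x).fun_mul (hasDerivAt_phi x)).fun_neg.congr_deriv ?_
    simp only [id_eq]; ring
  have hsplit := intervalIntegral.integral_sub (μ := volume)
    ((by fun_prop : Continuous fun t => t ^ 2 * phi t).intervalIntegrable a b)
    (continuous_phi.intervalIntegrable a b)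
  rw [intervalIntegral.integral_eq_sub_of_hasDerivAt hderiv
    ((by fun_prop : Continuous fun x => x ^ 2 * phi x - phi x).intervalIntegrable a b),
    ← Phi_sub_Phi] at hsplit
  linarith

lemma sq_phi_sub_div_Phi_sub_le {a b : ℝ} (hab : a < b) :
    (phi b - phi a) ^ 2 / (Phi b - Phi a) ≤ (Phi b - b * phi b) - (Phi a - a * phi a) := by
  have hP : 0 < Phi b - Phi a := sub_pos.mpr (strictMono_Phi hab)
  have := sq_integral_mul_le_integral_mul_integral hab.le (continuous_phi.intervalIntegrable a b)
    fun t _ => (phi_pos t).le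
  rw [integral_mul_phi, integral_sq_mul_phi, ← Phi_sub_Phi] at this
  rw [div_le_iff₀ hP]
  linarith [show (phi b - phi a) ^ 2 = (phi a - phi b) ^ 2 by ring]

lemma le_sq_phi_sub_div_Phi_sub {a b : ℝ} (hab : a < b) :
    (Phi b - b * phi b) - (Phi a - a * phi a) - ((b - a) / 2) ^ 2 * (Phi b - Phi a) ≤
      (phi b - phi a) ^ 2 / (Phi b - Phi a) := by
  have hP : 0 < Phi b - Phi a := sub_pos.mpr (strictMono_Phi hab)
  have := integral_mul_integral_sub_sq_le hab.le (continuous_phi.intervalIntegrable a b)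
    fun t _ => (phi_pos t).le
  rw [integral_mul_phi, integral_sq_mul_phi, ← Phi_sub_Phi] at this
  rw [le_div_iff₀ hP]
  linarith [show (phi b - phi a) ^ 2 = (phi a - phi b) ^ 2 by ring]

lemma sum_Icc_sub_odd_mul (f : ℝ → ℝ) (c h : ℝ) (k : ℕ) :
    ∑ i ∈ Finset.Icc 1 k, (f (c + (2 * (i : ℝ) + 1) * h) - f (c + (2 * (i : ℝ) - 1) * h)) =
      f (c + (2 * (k : ℝ) + 1) * h) - f (c + h) := by
  induction k with
  | zero => simp
  | succ k ih =>
    rw [Finset.sum_Icc_succ_top (by omega), ih]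
    push_cast
    ring_nf

-- Both bounds telescope over the cells `[c + (2i-1)h, c + (2i+1)h]`, `h = Δ / (2k)`, and the
-- gap between them is `h² (P (c + Δ + h) - P (c + h)) → 0`.
theorem tendsto_sum_Icc_of_increment_bounds {u : ℝ → ℝ → ℝ} {G P : ℝ → ℝ} {c Δ : ℝ}
    (hΔ : 0 < Δ) (hGc : ContinuousAt G c) (hGcΔ : ContinuousAt G (c + Δ))
    (hPc : ContinuousAt P c) (hPcΔ : ContinuousAt P (c + Δ))
    (hlower : ∀ a b, a < b → G b - G a - ((b - a) / 2) ^ 2 * (P b - P a) ≤ u a b)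
    (hupper : ∀ a b, a < b → u a b ≤ G b - G a) :
    Tendsto (fun k : ℕ => ∑ i ∈ Finset.Icc 1 k,
        u (c + (2 * (i : ℝ) - 1) * Δ / (2 * (k : ℝ))) (c + (2 * (i : ℝ) + 1) * Δ / (2 * (k : ℝ))))
      atTop (𝓝 (G (c + Δ) - G c)) := by
  simp only [mul_div_assoc]
  set h : ℕ → ℝ := fun k => Δ / (2 * k)
  have hh : Tendsto h atTop (𝓝 0) :=
    tendsto_const_nhds.div_atTop (tendsto_natCast_atTop_atTop.const_mul_atTop two_pos)
  have hend : ∀ᶠ k : ℕ in atTop, c + (2 * (k : ℝ) + 1) * h k = c + Δ + h k := by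
    filter_upwards [eventually_ne_atTop 0] with k hk
    simp only [h]
    field_simp
    ring
  have hlim : ∀ {F : ℝ → ℝ}, ContinuousAt F c → ContinuousAt F (c + Δ) →
      Tendsto (fun k : ℕ => F (c + (2 * (k : ℝ) + 1) * h k) - F (c + h k)) atTop
        (𝓝 (F (c + Δ) - F c)) := fun hc hcΔ => by
    refine Tendsto.sub ?_ (hc.tendsto.comp (by simpa using hh.const_add c))
    refine (hcΔ.tendsto.comp (by simpa using hh.const_add (c + Δ))).congr' ?_
    filter_upwards [hend] with k hk
    simp only [Function.comp, hk]
  have hcell : ∀ k : ℕ, 0 < k → ∀ i : ℕ,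
      c + (2 * (i : ℝ) - 1) * h k < c + (2 * (i : ℝ) + 1) * h k := fun k hk i => by
    have : 0 < h k := by simp only [h]; positivity
    linarith
  refine tendsto_of_tendsto_of_tendsto_of_le_of_le' (g := fun k : ℕ =>
      (G (c + (2 * (k : ℝ) + 1) * h k) - G (c + h k)) -
        h k ^ 2 * (P (c + (2 * (k : ℝ) + 1) * h k) - P (c + h k))) ?_ (hlim hGc hGcΔ) ?_ ?_
  · simpa using (hlim hGc hGcΔ).sub ((hh.pow 2).mul (hlim hPc hPcΔ))
  · filter_upwards [eventually_gt_atTop 0] with k hk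
    rw [← sum_Icc_sub_odd_mul, ← sum_Icc_sub_odd_mul, Finset.mul_sum, ← Finset.sum_sub_distrib]
    refine Finset.sum_le_sum fun i _ => ?_
    convert hlower _ _ (hcell k hk i) using 3
    congr 1; ring
  · filter_upwards [eventually_gt_atTop 0] with k hk
    rw [← sum_Icc_sub_odd_mul]
    exact Finset.sum_le_sum fun i _ => hupper _ _ (hcell k hk i)

/-- The interior Riemann-type series in the quantization analysis converges to
`c·φ(c) − (c+Δ)·φ(c+Δ) + Φ(c+Δ) − Φ(c)`. -/
theorem quantization_series_limit (c Δ : ℝ) (hΔ : 0 < Δ) :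
    Tendsto (fun k : ℕ => ∑ i ∈ Finset.Icc 1 k,
        (phi (c + (2 * (i : ℝ) + 1) * Δ / (2 * (k : ℝ))) -
            phi (c + (2 * (i : ℝ) - 1) * Δ / (2 * (k : ℝ)))) ^ 2 /
          (Phi (c + (2 * (i : ℝ) + 1) * Δ / (2 * (k : ℝ))) -
            Phi (c + (2 * (i : ℝ) - 1) * Δ / (2 * (k : ℝ)))))
      atTop
      (nhds (c * phi c - (c + Δ) * phi (c + Δ) + Phi (c + Δ) - Phi c)) := by
  have hG : Continuous fun x => Phi x - x * phi x := by
    have := continuous_Phi; fun_prop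
  convert tendsto_sum_Icc_of_increment_bounds
    (u := fun a b => (phi b - phi a) ^ 2 / (Phi b - Phi a)) hΔ hG.continuousAt hG.continuousAt continuous_Phi.continuousAt continuous_Phi.continuousAt
    (fun a b hab => le_sq_phi_sub_div_Phi_sub hab) (fun a b hab => sq_phi_sub_div_Phi_sub_le hab)
    using 2
  ring
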